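/- Let μ = μ_1 × ⋯ × μ_n be a product probability measure on {0,1}^n, let q be a positive integer, and let A_1, …, A_q ⊆ {0,1}^n each have μ(A_i) > 0. Then ∑_{x ∈ {0,1}^n} q^{h(x; A_1, …, A_q)} · μ({x}) ≤ 1 / ∏_{i=1}^{q} μ(A_i). -/

import Mathlib

open scoped Classical

/-- Probability weight of the point `x ∈ {0,1}ⁿ` under the product measure in which
coordinate `i` equals `true` with probability `w i`, independently. -/
noncomputable def cubeWt {n : ℕ} (w : Fin n → ℝ) (x : Fin n → Bool) : ℝ :=
  ∏ i : Fin n, if x i then w i else 1 - w i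

/-- Probability of the event `E` under the product measure given by `w`. -/
noncomputable def cubePr {n : ℕ} (w : Fin n → ℝ) (E : (Fin n → Bool) → Prop) : ℝ :=
  ∑ x : Fin n → Bool, if E x then cubeWt w x else 0

/-- Expectation of `f` under the product measure given by `w`. -/
noncomputable def cubeExp {n : ℕ} (w : Fin n → ℝ) (f : (Fin n → Bool) → ℝ) : ℝ :=
  ∑ x : Fin n → Bool, cubeWt w x * f x

/-- Hamming distance between two points of `{0,1}ⁿ`. -/
def hamm {n : ℕ} (x y : Fin n → Bool) : ℕ :=
  (Finset.univ.filter fun i => x i ≠ y i).card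

/-- Talagrand's distance `h(x; y¹, …, y^q) = |{i : x i ∉ {y¹ i, …, y^q i}}|`. -/
def hTup {n q : ℕ} (x : Fin n → Bool) (y : Fin q → Fin n → Bool) : ℕ :=
  (Finset.univ.filter fun i => ∀ j, x i ≠ y j i).card

/-- Talagrand's distance from `x` to the sets `A 1, …, A q`:
`h(x; A₁, …, A_q) = min { h(x; y¹, …, y^q) : y¹ ∈ A₁, …, y^q ∈ A_q }`. -/
noncomputable def hSet {n q : ℕ} (x : Fin n → Bool)
    (A : Fin q → Set (Fin n → Bool)) : ℕ :=
  sInf {k | ∃ y : Fin q → Fin n → Bool, (∀ j, y j ∈ A j) ∧ hTup x y = k}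


/-- Bernoulli-type: `(1-y)^q (1+qy) ≤ 1`. -/
lemma tal_bern (q : ℕ) {y : ℝ} (h0 : 0 ≤ y) (h1 : y ≤ 1) :
    (1 - y) ^ q * (1 + q * y) ≤ 1 := by
  induction q with
  | zero => simp
  | succ k ih =>
    have hk : (0:ℝ) ≤ (1 - y) ^ k := pow_nonneg (by linarith) k
    have e : ((k:ℝ)+1) = ((k+1 : ℕ) : ℝ) := by push_cast; ring
    calc (1 - y) ^ (k+1) * (1 + (k+1 : ℕ) * y)
        = (1 - y) ^ k * ((1 - y) * (1 + ((k:ℝ)+1) * y)) := by push_cast; ring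
      _ ≤ (1 - y) ^ k * (1 + k * y) := by
          apply mul_le_mul_of_nonneg_left _ hk
          nlinarith [sq_nonneg y]
      _ ≤ 1 := ih

/-- Two-point Hölder with exponents `1/q`. -/
lemma tal_holder {q : ℕ} (hq : 0 < q) (p : ℝ) (hp0 : 0 ≤ p) (hp1 : p ≤ 1)
    (u v : Fin q → ℝ) (hu : ∀ j, 1 ≤ u j) (hv : ∀ j, 1 ≤ v j) :
    (1 - p) * ∏ j, (u j) ^ ((q:ℝ)⁻¹) + p * ∏ j, (v j) ^ ((q:ℝ)⁻¹) ≤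
      ∏ j, ((1 - p) * u j + p * v j) ^ ((q:ℝ)⁻¹) := by
  set M : Fin q → ℝ := fun j => (1 - p) * u j + p * v j with hM
  have hM1 : ∀ j, 1 ≤ M j := by
    intro j
    have h1 : 0 ≤ (1 - p) * (u j - 1) := mul_nonneg (by linarith) (by linarith [hu j])
    have h2 : 0 ≤ p * (v j - 1) := mul_nonneg hp0 (by linarith [hv j])
    simp only [hM]; nlinarith
  have hMpos : ∀ j, (0:ℝ) < M j := fun j => lt_of_lt_of_le one_pos (hM1 j)
  have hPM : (0:ℝ) < ∏ j, (M j) ^ ((q:ℝ)⁻¹) :=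
    Finset.prod_pos fun j _ => Real.rpow_pos_of_pos (hMpos j) _
  rw [← div_le_one hPM]
  have hqi0 : (0:ℝ) ≤ (q:ℝ)⁻¹ := by positivity
  -- AM-GM for u/M and v/M
  have amgm : ∀ z : Fin q → ℝ, (∀ j, 0 ≤ z j) →
      ∏ j, (z j / M j) ^ ((q:ℝ)⁻¹) ≤ ∑ j, (q:ℝ)⁻¹ * (z j / M j) := by
    intro z hz
    have h := Real.geom_mean_le_arith_mean_weighted Finset.univ
      (fun _ => (q:ℝ)⁻¹) (fun j => z j / M j)
      (fun i _ => hqi0)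
      (by simp [Finset.card_univ]; field_simp)
      (fun i _ => div_nonneg (hz i) (hMpos i).le)
    simpa using h
  have key : ∀ z : Fin q → ℝ, (∀ j, 0 ≤ z j) →
      (∏ j, (z j) ^ ((q:ℝ)⁻¹)) / (∏ j, (M j) ^ ((q:ℝ)⁻¹)) ≤ ∑ j, (q:ℝ)⁻¹ * (z j / M j) := by
    intro z hz
    have e : (∏ j, (z j) ^ ((q:ℝ)⁻¹)) / (∏ j, (M j) ^ ((q:ℝ)⁻¹))
        = ∏ j, (z j / M j) ^ ((q:ℝ)⁻¹) := by
      rw [← Finset.prod_div_distrib]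
      exact Finset.prod_congr rfl fun j _ => (Real.div_rpow (hz j) (hMpos j).le _).symm
    rw [e]; exact amgm z hz
  have hzu : ∀ j, (0:ℝ) ≤ u j := fun j => le_trans zero_le_one (hu j)
  have hzv : ∀ j, (0:ℝ) ≤ v j := fun j => le_trans zero_le_one (hv j)
  have sum1 : (1 - p) * (∑ j, (q:ℝ)⁻¹ * (u j / M j)) + p * (∑ j, (q:ℝ)⁻¹ * (v j / M j)) = 1 := by
    rw [Finset.mul_sum, Finset.mul_sum, ← Finset.sum_add_distrib]
    have : ∀ j ∈ Finset.univ, (1-p) * ((q:ℝ)⁻¹ * (u j / M j)) + p * ((q:ℝ)⁻¹ * (v j / M j))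
        = (q:ℝ)⁻¹ := by
      intro j _
      have hMne : M j ≠ 0 := (hMpos j).ne'
      field_simp
      ring
    rw [Finset.sum_congr rfl this]
    simp [Finset.card_univ]
    field_simp
  calc ((1 - p) * ∏ j, (u j) ^ ((q:ℝ)⁻¹) + p * ∏ j, (v j) ^ ((q:ℝ)⁻¹)) / (∏ j, (M j) ^ ((q:ℝ)⁻¹))
      = (1-p) * ((∏ j, (u j) ^ ((q:ℝ)⁻¹)) / (∏ j, (M j) ^ ((q:ℝ)⁻¹)))
        + p * ((∏ j, (v j) ^ ((q:ℝ)⁻¹)) / (∏ j, (M j) ^ ((q:ℝ)⁻¹))) := by ring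
    _ ≤ (1 - p) * (∑ j, (q:ℝ)⁻¹ * (u j / M j)) + p * (∑ j, (q:ℝ)⁻¹ * (v j / M j)) := by
        apply add_le_add
        · exact mul_le_mul_of_nonneg_left (key u hzu) (by linarith)
        · exact mul_le_mul_of_nonneg_left (key v hzv) hp0
    _ = 1 := sum1

lemma cubeWt_nonneg {n : ℕ} {w : Fin n → ℝ} (hw : ∀ i, 0 ≤ w i ∧ w i ≤ 1)
    (x : Fin n → Bool) : 0 ≤ cubeWt w x := by
  apply Finset.prod_nonneg
  intro i _
  rcases hw i with ⟨h0, h1⟩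
  by_cases h : x i <;> simp [h] <;> linarith

lemma cubePr_nonneg {n : ℕ} {w : Fin n → ℝ} (hw : ∀ i, 0 ≤ w i ∧ w i ≤ 1)
    (E : (Fin n → Bool) → Prop) : 0 ≤ cubePr w E := by
  apply Finset.sum_nonneg
  intro x _
  by_cases h : E x <;> simp [h, cubeWt_nonneg hw]

lemma cubePr_mono {n : ℕ} {w : Fin n → ℝ} (hw : ∀ i, 0 ≤ w i ∧ w i ≤ 1)
    {E F : (Fin n → Bool) → Prop} (h : ∀ x, E x → F x) : cubePr w E ≤ cubePr w F := by
  apply Finset.sum_le_sum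
  intro x _
  by_cases hE : E x
  · simp [hE, h x hE]
  · simp only [hE, if_false]
    by_cases hF : F x <;> simp [hF, cubeWt_nonneg hw]

lemma cubePr_pos_nonempty {n : ℕ} {w : Fin n → ℝ}
    {E : (Fin n → Bool) → Prop} (h : 0 < cubePr w E) : ∃ x, E x := by
  by_contra hc
  push_neg at hc
  have : cubePr w E = 0 := by
    apply Finset.sum_eq_zero; intro x _; simp [hc x]
  rw [this] at h; exact lt_irrefl 0 h

lemma cubeWt_cons {n : ℕ} (w : Fin (n+1) → ℝ) (b : Bool) (x : Fin n → Bool) :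
    cubeWt w (Fin.cons b x) =
      (if b then w 0 else 1 - w 0) * cubeWt (w ∘ Fin.succ) x := by
  unfold cubeWt
  rw [Fin.prod_univ_succ]
  simp [Fin.cons_zero, Fin.cons_succ]

lemma sumCube_succ {n : ℕ} (f : (Fin (n+1) → Bool) → ℝ) :
    ∑ y : Fin (n+1) → Bool, f y =
      (∑ x : Fin n → Bool, f (Fin.cons false x)) + ∑ x : Fin n → Bool, f (Fin.cons true x) := by
  rw [← (Fin.consEquiv (fun _ : Fin (n+1) => Bool)).sum_comp f]
  rw [Fintype.sum_prod_type]
  rw [Fintype.sum_bool]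
  simp [Fin.consEquiv]
  ring

lemma cubePr_decomp {n : ℕ} (w : Fin (n+1) → ℝ) (E : (Fin (n+1) → Bool) → Prop) :
    cubePr w E = (1 - w 0) * cubePr (w ∘ Fin.succ) (fun x => E (Fin.cons false x))
      + w 0 * cubePr (w ∘ Fin.succ) (fun x => E (Fin.cons true x)) := by
  unfold cubePr
  rw [sumCube_succ (fun y => if E y then cubeWt w y else 0)]
  rw [Finset.mul_sum, Finset.mul_sum]
  congr 1
  · apply Finset.sum_congr rfl
    intro x _
    rw [cubeWt_cons]
    by_cases h : E (Fin.cons false x) <;> simp [h]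
  · apply Finset.sum_congr rfl
    intro x _
    rw [cubeWt_cons]
    by_cases h : E (Fin.cons true x) <;> simp [h]

lemma hTup_cons {n q : ℕ} (x : Fin n → Bool) (z : Fin q → Fin n → Bool)
    (b : Bool) (c : Fin q → Bool) :
    hTup (Fin.cons b x) (fun j => Fin.cons (c j) (z j)) =
      (if ∀ j, b ≠ c j then 1 else 0) + hTup x z := by
  unfold hTup
  have key : ∀ (m : ℕ) (p : Fin m → Prop) (_ : DecidablePred p),
      (Finset.univ.filter p).card = ∑ i, if p i then 1 else 0 := by
    intro m p hp
    simpa using (Finset.natCast_card_filter p Finset.univ : ((_ : ℕ) : ℕ) = _)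
  rw [key _ _ _, key _ _ _, Fin.sum_univ_succ]
  simp [Fin.cons_zero, Fin.cons_succ]

def cubeSec {n : ℕ} (b : Bool) (S : Set (Fin (n+1) → Bool)) : Set (Fin n → Bool) :=
  {x | Fin.cons b x ∈ S}

def cubePrj {n : ℕ} (S : Set (Fin (n+1) → Bool)) : Set (Fin n → Bool) :=
  {x | ∃ c, Fin.cons c x ∈ S}

lemma cubePrj_nonempty {n : ℕ} {S : Set (Fin (n+1) → Bool)} (h : S.Nonempty) :
    (cubePrj S).Nonempty := by
  obtain ⟨y, hy⟩ := h
  exact ⟨Fin.tail y, ⟨y 0, by rwa [Fin.cons_self_tail]⟩⟩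

lemma hSet_le {n q : ℕ} (x : Fin n → Bool) (A : Fin q → Set (Fin n → Bool))
    (y : Fin q → Fin n → Bool) (hy : ∀ j, y j ∈ A j) : hSet x A ≤ hTup x y :=
  Nat.sInf_le ⟨y, hy, rfl⟩

lemma hSet_spec {n q : ℕ} (x : Fin n → Bool) (A : Fin q → Set (Fin n → Bool))
    (hne : ∀ j, (A j).Nonempty) :
    ∃ y : Fin q → Fin n → Bool, (∀ j, y j ∈ A j) ∧ hTup x y = hSet x A := by
  have hne' : {k | ∃ y : Fin q → Fin n → Bool, (∀ j, y j ∈ A j) ∧ hTup x y = k}.Nonempty := by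
    refine ⟨hTup x (fun j => (hne j).choose), fun j => (hne j).choose, fun j => (hne j).choose_spec, rfl⟩
  exact Nat.sInf_mem hne'

lemma hSet_cons_le_prj {n q : ℕ} (b : Bool) (x : Fin n → Bool)
    (A : Fin q → Set (Fin (n+1) → Bool)) (hne : ∀ j, (A j).Nonempty) :
    hSet (Fin.cons b x) A ≤ 1 + hSet x (fun j => cubePrj (A j)) := by
  obtain ⟨z, hz, hzk⟩ := hSet_spec x (fun j => cubePrj (A j)) (fun j => cubePrj_nonempty (hne j))
  choose c hc using hz
  calc hSet (Fin.cons b x) A ≤ hTup (Fin.cons b x) (fun j => Fin.cons (c j) (z j)) :=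
        hSet_le _ _ _ hc
    _ = (if ∀ j, b ≠ c j then 1 else 0) + hTup x z := hTup_cons x z b c
    _ ≤ 1 + hSet x (fun j => cubePrj (A j)) := by
        rw [hzk]
        apply add_le_add_left
        split <;> omega

lemma hSet_cons_le_sec {n q : ℕ} (b : Bool) (x : Fin n → Bool)
    (A : Fin q → Set (Fin (n+1) → Bool)) (j₀ : Fin q)
    (hsec : (cubeSec b (A j₀)).Nonempty) (hne : ∀ j, (A j).Nonempty) :
    hSet (Fin.cons b x) A ≤
      hSet x (fun j => if j = j₀ then cubeSec b (A j) else cubePrj (A j)) := by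
  set C : Fin q → Set (Fin n → Bool) :=
    fun j => if j = j₀ then cubeSec b (A j) else cubePrj (A j) with hC
  have hCne : ∀ j, (C j).Nonempty := by
    intro j
    by_cases h : j = j₀
    · subst h; simpa [hC] using hsec
    · simpa [hC, h] using cubePrj_nonempty (hne j)
  obtain ⟨z, hz, hzk⟩ := hSet_spec x C hCne
  have hz' : ∀ j, ∃ cc : Bool, Fin.cons cc (z j) ∈ A j ∧ (j = j₀ → cc = b) := by
    intro j
    by_cases h : j = j₀
    · subst h
      have := hz j
      rw [hC] at this
      simp only [if_pos rfl] at this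
      exact ⟨b, this, fun _ => rfl⟩
    · have := hz j
      rw [hC] at this
      simp only [if_neg h] at this
      obtain ⟨cc, hcc⟩ := this
      exact ⟨cc, hcc, fun hh => absurd hh h⟩
  choose c hc1 hc2 using hz'
  calc hSet (Fin.cons b x) A ≤ hTup (Fin.cons b x) (fun j => Fin.cons (c j) (z j)) :=
        hSet_le _ _ _ hc1
    _ = (if ∀ j, b ≠ c j then 1 else 0) + hTup x z := hTup_cons x z b c
    _ ≤ hSet x C := by
        rw [hzk]
        have : ¬ (∀ j, b ≠ c j) := by
          intro hall
          exact hall j₀ (hc2 j₀ rfl).symm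
        simp [this]

/-- The main induction. -/
theorem tal_main : ∀ (n : ℕ) (w : Fin n → ℝ), (∀ i, 0 ≤ w i ∧ w i ≤ 1) →
    ∀ (q : ℕ), 0 < q → ∀ (A : Fin q → Set (Fin n → Bool)),
    (∀ i, 0 < cubePr w (fun x => x ∈ A i)) →
    ∑ x : Fin n → Bool, (q : ℝ) ^ hSet x A * cubeWt w x ≤
      1 / ∏ i, cubePr w (fun x => x ∈ A i) := by
  intro n
  induction n with
  | zero =>
    intro w hw q hq A hA
    have hmem : ∀ (x : Fin 0 → Bool) (i : Fin q), x ∈ A i := by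
      intro x i
      obtain ⟨z, hz⟩ := cubePr_pos_nonempty (hA i)
      rwa [Subsingleton.elim z x] at hz
    have hPr : ∀ i, cubePr w (fun x => x ∈ A i) = 1 := by
      intro i
      unfold cubePr
      rw [Finset.univ_unique, Finset.sum_singleton]
      simp [hmem, cubeWt]
    have hh : ∀ x : Fin 0 → Bool, hSet x A = 0 := by
      intro x
      apply Nat.sInf_eq_zero.2
      left
      exact ⟨fun _ => x, fun j => hmem x j, by simp [hTup]⟩
    rw [Finset.univ_unique, Finset.sum_singleton, hh]
    simp [hPr, cubeWt]
  | succ n ih =>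
    intro w hw q hq A hA
    set w' : Fin n → ℝ := w ∘ Fin.succ with hw'def
    have hw' : ∀ i, 0 ≤ w' i ∧ w' i ≤ 1 := fun i => hw _
    set p : ℝ := w 0 with hpdef
    obtain ⟨hp0, hp1⟩ := hw 0
    have hq1 : (1:ℝ) ≤ (q:ℝ) := by exact_mod_cast hq
    have hAne : ∀ j, (A j).Nonempty := fun j => cubePr_pos_nonempty (hA j)
    set a : Fin q → Bool → ℝ :=
      fun j b => cubePr w' (fun x => x ∈ cubeSec b (A j)) with hadef
    set bb : Fin q → ℝ := fun j => cubePr w' (fun x => x ∈ cubePrj (A j)) with hbbdef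
    have ha0 : ∀ j b, 0 ≤ a j b := fun j b => cubePr_nonneg hw' _
    have hab : ∀ j b, a j b ≤ bb j := by
      intro j b
      exact cubePr_mono hw' (fun x hx => ⟨b, hx⟩)
    have hAdec : ∀ j, cubePr w (fun x => x ∈ A j) = (1-p) * a j false + p * a j true := by
      intro j
      exact cubePr_decomp w _
    have hbbpos : ∀ j, 0 < bb j := by
      intro j
      rcases lt_or_ge 0 (bb j) with h | h
      · exact h
      · exfalso
        have hbb0 : bb j = 0 := le_antisymm h (cubePr_nonneg hw' _)
        have h0 : ∀ b, a j b = 0 := fun b =>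
          le_antisymm (hbb0 ▸ hab j b) (ha0 j b)
        have := hA j
        rw [hAdec j, h0 false, h0 true] at this
        simp at this
    set P : ℝ := ∏ j, bb j with hPdef
    have hPpos : 0 < P := Finset.prod_pos fun j _ => hbbpos j
    set S : Bool → ℝ :=
      fun b => ∑ x : Fin n → Bool, (q:ℝ) ^ hSet (Fin.cons b x) A * cubeWt w' x with hSdef
    have hSnn : ∀ b, 0 ≤ S b := by
      intro b
      apply Finset.sum_nonneg
      intro x _
      exact mul_nonneg (pow_nonneg (by positivity) _) (cubeWt_nonneg hw' x)
    -- decomposition of the LHS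
    have hLHS : ∑ y : Fin (n+1) → Bool, (q:ℝ) ^ hSet y A * cubeWt w y
        = (1-p) * S false + p * S true := by
      rw [sumCube_succ (fun y => (q:ℝ) ^ hSet y A * cubeWt w y)]
      rw [hSdef]
      rw [Finset.mul_sum, Finset.mul_sum]
      congr 1
      · apply Finset.sum_congr rfl
        intro x _
        rw [cubeWt_cons]
        simp only [Bool.false_eq_true, if_false]
        ring
      · apply Finset.sum_congr rfl
        intro x _
        rw [cubeWt_cons]
        simp only [if_true]
        ring
    -- option 0
    have IH0 := ih w' hw' q hq (fun j => cubePrj (A j)) (fun j => hbbpos j)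
    have opt0 : ∀ b, S b * P ≤ q := by
      intro b
      have step : S b ≤ q * ∑ x : Fin n → Bool,
          (q:ℝ) ^ hSet x (fun j => cubePrj (A j)) * cubeWt w' x := by
        rw [Finset.mul_sum, hSdef]
        apply Finset.sum_le_sum
        intro x _
        have h1 : hSet (Fin.cons b x) A ≤ 1 + hSet x (fun j => cubePrj (A j)) :=
          hSet_cons_le_prj b x A hAne
        have h2 : (q:ℝ) ^ hSet (Fin.cons b x) A
            ≤ (q:ℝ) ^ (1 + hSet x (fun j => cubePrj (A j))) :=
          pow_le_pow_right₀ hq1 h1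
        calc (q:ℝ) ^ hSet (Fin.cons b x) A * cubeWt w' x
            ≤ (q:ℝ) ^ (1 + hSet x (fun j => cubePrj (A j))) * cubeWt w' x :=
              mul_le_mul_of_nonneg_right h2 (cubeWt_nonneg hw' x)
          _ = q * ((q:ℝ) ^ hSet x (fun j => cubePrj (A j)) * cubeWt w' x) := by
              rw [pow_add, pow_one]; ring
      have h3 : S b ≤ q * (1 / P) :=
        le_trans step (mul_le_mul_of_nonneg_left IH0 (by positivity))
      have := mul_le_mul_of_nonneg_right h3 hPpos.le
      calc S b * P ≤ (q * (1/P)) * P := this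
        _ = q := by field_simp
    -- option j
    have optj : ∀ (j : Fin q) (b : Bool), 0 < a j b → S b * P * a j b ≤ bb j := by
      intro j b hajb
      set C : Fin q → Set (Fin n → Bool) :=
        fun i => if i = j then cubeSec b (A i) else cubePrj (A i) with hCdef
      have hCpos : ∀ i, 0 < cubePr w' (fun x => x ∈ C i) := by
        intro i
        by_cases h : i = j
        · subst h
          simpa [hCdef] using hajb
        · simpa [hCdef, h] using hbbpos i
      have IHj := ih w' hw' q hq C hCpos
      set E : ℝ := ∏ i ∈ Finset.univ.erase j, bb i with hEdef
      have hEpos : 0 < E := Finset.prod_pos fun i _ => hbbpos i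
      have hprod : ∏ i, cubePr w' (fun x => x ∈ C i) = a j b * E := by
        rw [← Finset.mul_prod_erase Finset.univ _ (Finset.mem_univ j)]
        congr 1
        · simp [hCdef]; rfl
        · apply Finset.prod_congr rfl
          intro i hi
          have : i ≠ j := (Finset.mem_erase.1 hi).1
          simp [hCdef, this]; rfl
      have hPsplit : P = bb j * E := by
        rw [hPdef, hEdef, ← Finset.mul_prod_erase Finset.univ _ (Finset.mem_univ j)]
      have hsecne : (cubeSec b (A j)).Nonempty := cubePr_pos_nonempty hajb
      have hs : S b ≤ ∑ x : Fin n → Bool, (q:ℝ) ^ hSet x C * cubeWt w' x := by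
        rw [hSdef]
        apply Finset.sum_le_sum
        intro x _
        apply mul_le_mul_of_nonneg_right _ (cubeWt_nonneg hw' x)
        exact pow_le_pow_right₀ hq1 (hSet_cons_le_sec b x A j hsecne hAne)
      have h1 : S b * (a j b * E) ≤ 1 := by
        rw [← le_div_iff₀ (mul_pos hajb hEpos)]
        refine le_trans hs ?_
        rw [hprod] at IHj
        simpa using IHj
      calc S b * P * a j b = bb j * (S b * (a j b * E)) := by rw [hPsplit]; ring
        _ ≤ bb j * 1 := mul_le_mul_of_nonneg_left h1 (hbbpos j).le
        _ = bb j := mul_one _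
    -- key estimate
    set D : Fin q → Bool → ℝ := fun j b => 1 + q * (1 - a j b / bb j) with hDdef
    have key : ∀ j b, S b * P ≤ D j b := by
      intro j b
      show S b * P ≤ 1 + (q:ℝ) * (1 - a j b / bb j)
      rcases eq_or_lt_of_le (ha0 j b) with h0 | hpos
      · have e : a j b / bb j = 0 := by rw [← h0]; simp
        rw [e]
        norm_num
        linarith [opt0 b]
      · rcases le_or_gt ((q:ℝ) * a j b) (bb j) with hc | hc
        · have hr : (q:ℝ) * (a j b / bb j) ≤ 1 := by
            rw [mul_div_assoc']
            exact (div_le_one (hbbpos j)).2 hc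
          have expand : 1 + (q:ℝ) * (1 - a j b / bb j)
              = 1 + (q:ℝ) - (q:ℝ) * (a j b / bb j) := by ring
          rw [expand]
          linarith [opt0 b]
        · have h1 : S b * P ≤ bb j / a j b := by
            rw [le_div_iff₀ hpos]
            exact optj j b hpos
          have h2 : bb j / a j b ≤ 1 + (q:ℝ) * (1 - a j b / bb j) := by
            rw [div_le_iff₀ hpos]
            have hbne : bb j ≠ 0 := (hbbpos j).ne'
            have key2 : ((1 + (q:ℝ) * (1 - a j b / bb j)) * a j b - bb j) * bb j
                = (bb j - a j b) * ((q:ℝ) * a j b - bb j) := by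
              field_simp
              ring
            nlinarith [mul_nonneg (sub_nonneg.2 (hab j b)) (sub_nonneg.2 hc.le),
              hbbpos j, key2]
          exact h1.trans h2
    have hD1 : ∀ j b, 1 ≤ D j b := by
      intro j b
      have h1 : a j b / bb j ≤ 1 := (div_le_one (hbbpos j)).2 (hab j b)
      have h2 : 0 ≤ (q:ℝ) * (1 - a j b / bb j) := mul_nonneg (by positivity) (by linarith)
      rw [hDdef]
      linarith
    -- geometric mean
    have geo : ∀ b, S b * P ≤ ∏ j, (D j b) ^ ((q:ℝ)⁻¹) := by
      intro b
      have hc0 : 0 ≤ S b * P := mul_nonneg (hSnn b) hPpos.le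
      calc S b * P = ∏ _j : Fin q, ((S b * P) ^ ((q:ℝ)⁻¹)) := by
            rw [Finset.prod_const, Finset.card_univ, Fintype.card_fin]
            exact (Real.rpow_inv_natCast_pow hc0 hq.ne').symm
        _ ≤ ∏ j, (D j b) ^ ((q:ℝ)⁻¹) := by
            apply Finset.prod_le_prod
            · intro j _; exact Real.rpow_nonneg hc0 _
            · intro j _
              exact Real.rpow_le_rpow hc0 (key j b) (by positivity)
    -- Hölder
    have hold := tal_holder hq p hp0 hp1 (fun j => D j false) (fun j => D j true)
      (fun j => hD1 j false) (fun j => hD1 j true)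
    -- Bernoulli step
    have hfin : ∀ j : Fin q,
        ((1 - p) * D j false + p * D j true) ^ ((q:ℝ)⁻¹)
          ≤ bb j / cubePr w (fun x => x ∈ A j) := by
      intro j
      have hμpos : 0 < cubePr w (fun x => x ∈ A j) := hA j
      set μ : ℝ := cubePr w (fun x => x ∈ A j) with hμdef
      have hμle : μ ≤ bb j := by
        rw [hμdef, hAdec j]
        nlinarith [hab j false, hab j true]
      have hMeq : (1 - p) * D j false + p * D j true = 1 + q * (1 - μ / bb j) := by
        rw [hDdef, hμdef, hAdec j]
        have hbne : bb j ≠ 0 := (hbbpos j).ne'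
        field_simp
        ring
      have hy0 : 0 ≤ 1 - μ / bb j := by
        have : μ / bb j ≤ 1 := (div_le_one (hbbpos j)).2 hμle
        linarith
      have hy1 : 1 - μ / bb j ≤ 1 := by
        have : 0 ≤ μ / bb j := div_nonneg hμpos.le (hbbpos j).le
        linarith
      have hb := tal_bern q hy0 hy1
      have h1y : 1 - (1 - μ / bb j) = μ / bb j := by ring
      rw [h1y] at hb
      have hpow : 0 < (μ / bb j) ^ q := pow_pos (div_pos hμpos (hbbpos j)) q
      have hM : 1 + (q:ℝ) * (1 - μ / bb j) ≤ (bb j / μ) ^ q := by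
        have e : (bb j / μ) ^ q = 1 / (μ / bb j) ^ q := by
          rw [div_pow, div_pow, one_div_div]
        rw [e, le_div_iff₀ hpow, mul_comm]
        exact hb
      rw [hMeq]
      have hMnn : 0 ≤ 1 + (q:ℝ) * (1 - μ / bb j) := by
        nlinarith [mul_nonneg (Nat.cast_nonneg q : (0:ℝ) ≤ q) hy0]
      calc (1 + (q:ℝ) * (1 - μ / bb j)) ^ ((q:ℝ)⁻¹)
          ≤ ((bb j / μ) ^ q) ^ ((q:ℝ)⁻¹) := Real.rpow_le_rpow hMnn hM (by positivity)
        _ = bb j / μ := Real.pow_rpow_inv_natCast (div_nonneg (hbbpos j).le hμpos.le) hq.ne'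
    -- putting things together
    have total : ((1-p) * S false + p * S true) * P ≤ P / ∏ j, cubePr w (fun x => x ∈ A j) := by
      calc ((1-p) * S false + p * S true) * P
          = (1-p) * (S false * P) + p * (S true * P) := by ring
        _ ≤ (1-p) * ∏ j, (D j false) ^ ((q:ℝ)⁻¹) + p * ∏ j, (D j true) ^ ((q:ℝ)⁻¹) := by
            apply add_le_add
            · exact mul_le_mul_of_nonneg_left (geo false) (by linarith)
            · exact mul_le_mul_of_nonneg_left (geo true) hp0
        _ ≤ ∏ j, ((1 - p) * D j false + p * D j true) ^ ((q:ℝ)⁻¹) := hold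
        _ ≤ ∏ j, bb j / cubePr w (fun x => x ∈ A j) := by
            apply Finset.prod_le_prod
            · intro j _
              have t1 : 0 ≤ (1-p) * D j false :=
                mul_nonneg (by linarith) (le_trans zero_le_one (hD1 j false))
              have t2 : 0 ≤ p * D j true :=
                mul_nonneg hp0 (le_trans zero_le_one (hD1 j true))
              exact Real.rpow_nonneg (by linarith) _
            · intro j _
              exact hfin j
        _ = P / ∏ j, cubePr w (fun x => x ∈ A j) := by
            rw [Finset.prod_div_distrib]
    have hprodA : 0 < ∏ j, cubePr w (fun x => x ∈ A j) :=
      Finset.prod_pos fun j _ => hA j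
    rw [hLHS]
    rw [← mul_le_mul_iff_left₀ hPpos]
    calc ((1-p) * S false + p * S true) * P
        ≤ P / ∏ j, cubePr w (fun x => x ∈ A j) := total
      _ = 1 / (∏ j, cubePr w (fun x => x ∈ A j)) * P := by ring

/-- Talagrand's inequality on the cube: for a product measure on `{0,1}ⁿ` and sets
`A 1, …, A q` of positive measure, `∑ₓ q^{h(x; A₁,…,A_q)}·μ({x}) ≤ 1 / ∏ᵢ μ(Aᵢ)`. -/
theorem stmt5 {n : ℕ} (w : Fin n → ℝ) (hw : ∀ i, 0 ≤ w i ∧ w i ≤ 1)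
    (q : ℕ) (hq : 0 < q) (A : Fin q → Set (Fin n → Bool))
    (hA : ∀ i, 0 < cubePr w (fun x => x ∈ A i)) :
    ∑ x : Fin n → Bool, (q : ℝ) ^ hSet x A * cubeWt w x ≤
      1 / ∏ i, cubePr w (fun x => x ∈ A i) := by
  exact tal_main n w hw q hq A hA
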